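/- For the scalar MCP proximal problem with δτ > 1: the minimizer η of f(η) = (δ/2)(η − u)² + ρ_τ(|η|, γ) over η ∈ ℝ, where u ∈ ℝ, equals u if |u| ≥ τγ, and equals (τδ/(τδ−1))·sign(u)·max(|u| − γ/δ, 0) if |u| < τγ. -/
import Mathlib
open intervalIntegral

lemma int_low (c : ℝ) (hc : 0 < c) (t : ℝ) (ht : 0 ≤ t) (htc : t ≤ c) :
    ∫ x in (0:ℝ)..t, max (1 - x / c) 0 = t - t ^ 2 / (2 * c) := by
  rw [intervalIntegral.integral_congr (g := fun x => 1 - x / c)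
    (by
      intro x hx
      rw [Set.uIcc_of_le ht] at hx
      have h2 : x ≤ c := hx.2.trans htc
      have : 0 ≤ 1 - x / c := by rw [sub_nonneg, div_le_one hc]; exact h2
      simp [max_eq_left this])]
  rw [intervalIntegral.integral_sub intervalIntegrable_const
    ((continuous_id'.div_const c).intervalIntegrable _ _)]
  simp [integral_div, integral_id]
  ring

lemma rho_eval (τ γ : ℝ) (hτ : 0 < τ) (hγ : 0 < γ) (t : ℝ) (ht : 0 ≤ t) :
    γ * ∫ x in (0:ℝ)..t, max (1 - x / (τ * γ)) 0 =
      if t ≤ τ * γ then γ * t - t ^ 2 / (2 * τ) else τ * γ ^ 2 / 2 := by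
  have hc : 0 < τ * γ := mul_pos hτ hγ
  have hcont : Continuous fun x : ℝ => max (1 - x / (τ * γ)) 0 :=
    (continuous_const.sub (continuous_id'.div_const _)).max continuous_const
  split_ifs with h
  · rw [int_low _ hc t ht h]
    field_simp
  · push_neg at h
    rw [← intervalIntegral.integral_add_adjacent_intervals
      (hcont.intervalIntegrable 0 (τ * γ)) (hcont.intervalIntegrable (τ * γ) t)]
    rw [int_low _ hc _ hc.le le_rfl]
    have h2 : ∫ x in (τ * γ)..t, max (1 - x / (τ * γ)) 0 = 0 := by
      rw [intervalIntegral.integral_congr (g := fun _ => (0:ℝ))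
        (by
          intro x hx
          rw [Set.uIcc_of_le h.le] at hx
          have : 1 - x / (τ * γ) ≤ 0 := by
            rw [sub_nonpos, le_div_iff₀ hc]; nlinarith [hx.1]
          simp [max_eq_right this])]
      simp
    rw [h2]
    field_simp
    ring


set_option maxHeartbeats 800000 in

lemma aux_main (τ γ δ u : ℝ) (hτ : 0 < τ) (hγ : 0 < γ) (hδ : 0 < δ) (hτδ : 1 < τ * δ)
    (hu : 0 ≤ u)
    (ηhat : ℝ)
    (hηhat : ηhat = if τ * γ ≤ |u| then u
      else (τ * δ / (τ * δ - 1)) * Real.sign u * max (|u| - γ / δ) 0)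
    (η : ℝ) (R : ℝ → ℝ)
    (hR : ∀ t : ℝ, R t = if t ≤ τ * γ then γ * t - t ^ 2 / (2 * τ) else τ * γ ^ 2 / 2) :
    δ / 2 * (ηhat - u) ^ 2 + R |ηhat| ≤ δ / 2 * (η - u) ^ 2 + R |η| := by
  have hc : 0 < τ * γ := mul_pos hτ hγ
  have h2τ : (0:ℝ) < 2 * τ := by linarith
  have habs : |u| = u := abs_of_nonneg hu
  set s := |η| with hs
  have hs2 : s ^ 2 = η ^ 2 := sq_abs η
  have hsη : η ≤ s := le_abs_self η
  have hs0 : 0 ≤ s := abs_nonneg η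
  rw [habs] at hηhat
  by_cases hA : τ * γ ≤ u
  · -- case |u| ≥ τγ : ηhat = u
    rw [if_pos hA] at hηhat
    rw [hηhat, abs_of_nonneg hu]
    have hRu : R u = τ * γ ^ 2 / 2 := by
      rw [hR]
      split_ifs with h1
      · have : u = τ * γ := le_antisymm h1 hA
        rw [this]; field_simp; ring
      · rfl
    rw [hRu, hR]
    by_cases hsb : s ≤ τ * γ
    · rw [if_pos hsb, ← sub_nonneg]
      have key : (τ * γ - s) ^ 2 ≤ τ * δ * (η - u) ^ 2 := by
        have h1 : τ * γ - s ≤ u - η := by nlinarith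
        have h2 : (0:ℝ) ≤ τ * γ - s := by linarith
        nlinarith [sq_nonneg (u - η), mul_le_mul h1 h1 h2 (by linarith : (0:ℝ) ≤ u - η)]
      have hid : δ / 2 * (η - u) ^ 2 + (γ * s - s ^ 2 / (2 * τ)) -
          (δ / 2 * (u - u) ^ 2 + τ * γ ^ 2 / 2) =
          (τ * δ * (η - u) ^ 2 - (τ * γ - s) ^ 2) / (2 * τ) := by
        field_simp
        ring
      rw [hid]
      apply div_nonneg (by linarith) h2τ.le
    · rw [if_neg hsb]
      nlinarith [sq_nonneg (η - u)]
  · -- |u| < τγ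
    push_neg at hA
    rw [if_neg (not_le.2 hA)] at hηhat
    by_cases hB : u * δ ≤ γ
    · -- small u: ηhat = 0
      have hmax : max (u - γ / δ) 0 = 0 := by
        rw [max_eq_right]
        rw [sub_nonpos, le_div_iff₀ hδ]
        exact hB
      rw [hmax, mul_zero] at hηhat
      subst hηhat
      rw [hR, hR]
      simp only [abs_zero]
      rw [if_pos hc.le]
      have h0 : γ * 0 - 0 ^ 2 / (2 * τ) = 0 := by norm_num
      rw [h0]
      by_cases hsb : s ≤ τ * γ
      · rw [if_pos hsb, ← sub_nonneg]
        have hid : δ / 2 * (η - u) ^ 2 + (γ * s - s ^ 2 / (2 * τ)) -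
            (δ / 2 * (0 - u) ^ 2 + 0) =
            (τ * δ * η ^ 2 - s ^ 2 - 2 * τ * δ * η * u + 2 * τ * γ * s) / (2 * τ) := by
          field_simp
          ring
        rw [hid]
        apply div_nonneg _ h2τ.le
        nlinarith [mul_nonneg (sub_nonneg.2 hB) hs0,
          mul_nonneg (mul_nonneg hδ.le hu) (sub_nonneg.2 hsη),
          mul_nonneg (sub_nonneg.2 hτδ.le) (sq_nonneg s)]
      · rw [if_neg hsb, ← sub_nonneg]
        push_neg at hsb
        have h1 : γ ≤ δ * s := by nlinarith
        nlinarith [mul_nonneg (sub_nonneg.2 hB) hs0,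
          mul_nonneg (mul_nonneg hδ.le hu) (sub_nonneg.2 hsη),
          mul_nonneg (sub_nonneg.2 hsb.le) (sub_nonneg.2 h1),
          mul_nonneg (mul_nonneg hγ.le (sub_nonneg.2 hτδ.le)) hs0]
    · -- γ/δ < u
      push_neg at hB
      have hu0 : 0 < u := by
        rcases hu.lt_or_eq with h | h
        · exact h
        · exfalso; nlinarith
      rw [Real.sign_of_pos hu0] at hηhat
      have hle : (0:ℝ) ≤ u - γ / δ := by
        rw [sub_nonneg, div_le_iff₀ hδ]
        nlinarith
      rw [max_eq_left hle] at hηhat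
      have hτδ1 : (0:ℝ) < τ * δ - 1 := by linarith
      have hτδ1' : τ * δ - 1 ≠ 0 := hτδ1.ne'
      have hAeq : (τ * δ - 1) * ηhat = τ * (δ * u - γ) := by
        rw [hηhat]
        field_simp [hτδ1.ne', hδ.ne']
      have hηhat0 : 0 ≤ ηhat := by nlinarith
      have hηhatc : ηhat ≤ τ * γ := by nlinarith
      rw [hR, hR, abs_of_nonneg hηhat0, if_pos hηhatc, ← sub_nonneg]
      have e3 : (η - ηhat) * ((τ * δ - 1) * ηhat - τ * (δ * u - γ)) = 0 := by
        rw [hAeq]; ring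
      by_cases hsb : s ≤ τ * γ
      · rw [if_pos hsb]
        have hid : δ / 2 * (η - u) ^ 2 + (γ * s - s ^ 2 / (2 * τ)) -
            (δ / 2 * (ηhat - u) ^ 2 + (γ * ηhat - ηhat ^ 2 / (2 * τ))) =
            (τ * δ * (η - u) ^ 2 + 2 * τ * γ * s - s ^ 2
              - (τ * δ * (ηhat - u) ^ 2 + 2 * τ * γ * ηhat - ηhat ^ 2)) / (2 * τ) := by
          field_simp
          ring
        rw [hid]
        apply div_nonneg _ h2τ.le
        nlinarith [mul_nonneg (sub_nonneg.2 hτδ.le) (sq_nonneg (η - ηhat)),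
          mul_nonneg (mul_nonneg h2τ.le hγ.le) (sub_nonneg.2 hsη), e3]
      · rw [if_neg hsb]
        have hid : δ / 2 * (η - u) ^ 2 + τ * γ ^ 2 / 2 -
            (δ / 2 * (ηhat - u) ^ 2 + (γ * ηhat - ηhat ^ 2 / (2 * τ))) =
            (τ * δ * (η - u) ^ 2 + τ ^ 2 * γ ^ 2
              - (τ * δ * (ηhat - u) ^ 2 + 2 * τ * γ * ηhat - ηhat ^ 2)) / (2 * τ) := by
          field_simp
          ring
        rw [hid]
        apply div_nonneg _ h2τ.le
        nlinarith [mul_nonneg (sub_nonneg.2 hτδ.le) (sq_nonneg (η - ηhat)),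
          mul_nonneg (mul_nonneg h2τ.le hγ.le) (sub_nonneg.2 hsη), e3,
          sq_nonneg (s - τ * γ)]


/-- For the scalar MCP proximal problem with `δτ > 1`: the minimizer of
`f(η) = (δ/2)(η − u)² + ρ_τ(|η|, γ)` over `η ∈ ℝ` equals `u` if `|u| ≥ τγ`, and equals
`(τδ/(τδ−1))·sign(u)·max(|u| − γ/δ, 0)` if `|u| < τγ`. -/
theorem stmt_4 (τ γ δ u : ℝ) (hτ : 0 < τ) (hγ : 0 < γ) (hδ : 0 < δ) (hτδ : 1 < τ * δ)
    (ρ : ℝ → ℝ)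
    (hρ : ∀ t : ℝ, ρ t = γ * ∫ x in (0:ℝ)..t, max (1 - x / (τ * γ)) 0)
    (ηhat : ℝ)
    (hηhat : ηhat = if τ * γ ≤ |u| then u
      else (τ * δ / (τ * δ - 1)) * Real.sign u * max (|u| - γ / δ) 0) :
    ∀ η : ℝ, δ / 2 * (ηhat - u) ^ 2 + ρ |ηhat| ≤ δ / 2 * (η - u) ^ 2 + ρ |η| := by
  intro η
  set R : ℝ → ℝ := fun t => if t ≤ τ * γ then γ * t - t ^ 2 / (2 * τ) else τ * γ ^ 2 / 2
    with hRdef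
  have hR : ∀ t : ℝ, R t = if t ≤ τ * γ then γ * t - t ^ 2 / (2 * τ) else τ * γ ^ 2 / 2 :=
    fun t => rfl
  have hρR : ∀ t : ℝ, ρ |t| = R |t| := by
    intro t
    rw [hρ, rho_eval τ γ hτ hγ _ (abs_nonneg t), hR]
  rw [hρR, hρR]
  rcases le_or_gt 0 u with hu | hu
  · exact aux_main τ γ δ u hτ hγ hδ hτδ hu ηhat hηhat η R hR
  · have heq : -ηhat = if τ * γ ≤ |(-u)| then -u
        else (τ * δ / (τ * δ - 1)) * Real.sign (-u) * max (|(-u)| - γ / δ) 0 := by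
      rw [abs_neg, Real.sign_neg, hηhat]
      split_ifs <;> ring
    have h := aux_main τ γ δ (-u) hτ hγ hδ hτδ (by linarith) (-ηhat) heq (-η) R hR
    rw [abs_neg, abs_neg] at h
    calc δ / 2 * (ηhat - u) ^ 2 + R |ηhat|
        = δ / 2 * (-ηhat - -u) ^ 2 + R |ηhat| := by ring_nf
      _ ≤ δ / 2 * (-η - -u) ^ 2 + R |η| := h
      _ = δ / 2 * (η - u) ^ 2 + R |η| := by ring_nf
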